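/- Let G be a finite group, T a subgroup of order p, C = C_G(T), O_C = O_p(C), and suppose N_G(O_C) has characteristic p. Then C has characteristic p. -/

import Mathlib

/-- The largest normal `p`-subgroup `O_p(G)`: the join of all normal `p`-subgroups. -/
def pCore (p : ℕ) (G : Type*) [Group G] : Subgroup G :=
  ⨆ (N : Subgroup G) (_ : N.Normal) (_ : IsPGroup p N), N

/-- A group `G` has characteristic `p` if `C_G(O_p(G)) ≤ O_p(G)`. -/
def HasCharP (p : ℕ) (G : Type*) [Group G] : Prop :=
  Subgroup.centralizer (pCore p G : Set G) ≤ pCore p G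

/-- An element is `p`-central if it has order `p` and lies in the center of some
Sylow `p`-subgroup of `G`. -/
def IsPCentral (p : ℕ) {G : Type*} [Group G] (x : G) : Prop :=
  orderOf x = p ∧ ∃ S : Sylow p G,
    x ∈ (S : Subgroup G) ⊓ Subgroup.centralizer ((S : Subgroup G) : Set G)

/-- A `p`-subgroup `P` is `p`-centric if `Z(P) = P ⊓ C_G(P)` is a Sylow `p`-subgroup of
`C_G(P)`, expressed via maximality among `p`-subgroups of `C_G(P)`. -/
def IsPCentric (p : ℕ) {G : Type*} [Group G] (P : Subgroup G) : Prop :=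
  ∀ Q : Subgroup G, Q ≤ Subgroup.centralizer (P : Set G) → IsPGroup p Q →
    P ⊓ Subgroup.centralizer (P : Set G) ≤ Q →
    Q = P ⊓ Subgroup.centralizer (P : Set G)

/-- The step `P ↦ O_p(N_G(P))`, viewed as a subgroup of `G`. -/
def pRadicalStep (p : ℕ) {G : Type*} [Group G] (P : Subgroup G) : Subgroup G :=
  (pCore p ↥(Subgroup.normalizer (P : Set G))).map (Subgroup.normalizer (P : Set G)).subtype

/-- The chain `P₀ = Q`, `P_{i+1} = O_p(N_G(P_i))`. -/
def radChain (p : ℕ) {G : Type*} [Group G] (Q : Subgroup G) : ℕ → Subgroup G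
  | 0 => Q
  | n + 1 => pRadicalStep p (radChain p Q n)

/-- `G` has local characteristic `p`: every `p`-local subgroup has characteristic `p`. -/
def LocalCharP (p : ℕ) (G : Type*) [Group G] : Prop :=
  ∀ P : Subgroup G, P ≠ ⊥ → IsPGroup p P → HasCharP p ↥(Subgroup.normalizer (P : Set G))

/-- `G` has parabolic characteristic `p`: every `p`-local subgroup containing a Sylow
`p`-subgroup of `G` has characteristic `p`. -/
def ParabolicCharP (p : ℕ) (G : Type*) [Group G] : Prop :=
  ∀ P : Subgroup G, P ≠ ⊥ → IsPGroup p P →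
    (∃ S : Sylow p G, (S : Subgroup G) ≤ Subgroup.normalizer (P : Set G)) → HasCharP p ↥(Subgroup.normalizer (P : Set G))

/-! Let `N = N_G(O)` and `X = C_G(O)`; since `T ≤ O` we have `X ≤ C ≤ N`, so `O_p(N) ∩ X` is a
normal `p`-subgroup of `C` and lies in `O`. If `z ∈ X` is a `p'`-element and `q ∈ O_p(N)`, the
commutator `[z, q]` lies in `O_p(N) ∩ X ≤ O` and therefore commutes with `z`; hence
`[z, q]^m = [z^m, q] = 1` for `m = o(z)`, prime to `p`, forcing `[z, q] = 1`. Thus `z` centralizes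
`O_p(N)`, so `z ∈ O_p(N)` by characteristic `p`, and `z = 1`. So `X` is a normal `p`-subgroup
of `C`, and `C_C(O_p(C)) ≤ X ≤ O_p(C)`. -/

open Subgroup
open scoped commutatorElement

section PCore

variable {p : ℕ} {G : Type*} [Group G]

lemma pCore_eq_sSup : pCore p G = sSup {N : Subgroup G | N.Normal ∧ IsPGroup p N} := by
  rw [sSup_eq_iSup]
  simp only [Set.mem_ofPred_eq, iSup_and]
  rfl

lemma le_pCore {N : Subgroup G} (hN : N.Normal) (hp : IsPGroup p N) : N ≤ pCore p G :=
  le_iSup_of_le N (le_iSup_of_le hN (le_iSup_of_le hp le_rfl))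

lemma mem_pCore_iff {x : G} :
    x ∈ pCore p G ↔ ∃ N : Subgroup G, N.Normal ∧ IsPGroup p N ∧ x ∈ N := by
  refine ⟨fun hx => ?_, fun ⟨N, hN, hp, hx⟩ => le_pCore hN hp hx⟩
  have hdir : DirectedOn (· ≤ ·) {N : Subgroup G | N.Normal ∧ IsPGroup p N} := by
    rintro N₁ ⟨hN₁, hp₁⟩ N₂ ⟨hN₂, hp₂⟩
    exact ⟨N₁ ⊔ N₂, ⟨inferInstance, hp₁.to_sup_of_normal_right hp₂⟩, le_sup_left, le_sup_right⟩
  have hne : {N : Subgroup G | N.Normal ∧ IsPGroup p N}.Nonempty :=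
    ⟨⊥, inferInstance, IsPGroup.of_bot⟩
  rw [pCore_eq_sSup, mem_sSup_of_directedOn hne hdir] at hx
  obtain ⟨N, ⟨hN, hp⟩, hxN⟩ := hx
  exact ⟨N, hN, hp, hxN⟩

instance pCore_normal : (pCore p G).Normal where
  conj_mem x hx g := by
    obtain ⟨N, hN, hp, hxN⟩ := mem_pCore_iff.mp hx
    exact le_pCore hN hp (hN.conj_mem x hxN g)

lemma pow_pow_eq_one_of_mem_pCore {x : G} (hx : x ∈ pCore p G) : ∃ k, x ^ p ^ k = 1 := by
  obtain ⟨N, -, hp, hxN⟩ := mem_pCore_iff.mp hx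
  obtain ⟨k, hk⟩ := hp ⟨x, hxN⟩
  exact ⟨k, by simpa using congrArg Subtype.val hk⟩

lemma pCore_isPGroup : IsPGroup p (pCore p G) := fun x => by
  obtain ⟨k, hk⟩ := pow_pow_eq_one_of_mem_pCore x.2
  exact ⟨k, Subtype.ext (by simpa using hk)⟩

lemma IsPGroup.comap_le_pCore {H : Type*} [Group H] {N : Subgroup H} [N.Normal]
    (hN : IsPGroup p N) (f : G →* H) (hf : Function.Injective f) : N.comap f ≤ pCore p G :=
  le_pCore inferInstance (hN.comap_of_injective f hf)

lemma le_map_subtype_pCore {H K : Subgroup G} (hHK : H ≤ K) [(H.subgroupOf K).Normal]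
    (hp : IsPGroup p H) : H ≤ (pCore p K).map K.subtype := by
  calc H = (H.subgroupOf K).map K.subtype := by rw [subgroupOf_map_subtype, inf_eq_left.mpr hHK]
    _ ≤ (pCore p K).map K.subtype :=
      map_mono (le_pCore inferInstance (hp.comap_of_injective _ K.subtype_injective))

lemma commutatorElement_pow_left_of_commute {z q : G} (h : Commute z ⁅z, q⁆) (n : ℕ) :
    ⁅z ^ n, q⁆ = ⁅z, q⁆ ^ n := by
  induction n with
  | zero => simp
  | succ n ih =>
    calc ⁅z ^ (n + 1), q⁆ = z * ⁅z ^ n, q⁆ * z⁻¹ * ⁅z, q⁆ := by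
          simp only [commutatorElement_def]; group
      _ = ⁅z, q⁆ ^ (n + 1) := by rw [ih, (h.pow_right n).eq, mul_inv_cancel_right, pow_succ]

lemma commute_of_commute_commutatorElement {z q : G} {m k : ℕ} (h : Commute z ⁅z, q⁆)
    (hz : z ^ m = 1) (hc : ⁅z, q⁆ ^ k = 1) (hmk : m.Coprime k) : Commute z q := by
  rw [← commutatorElement_eq_one_iff_commute, ← pow_eq_one_iff_of_coprime hmk]
  exact ⟨by rw [← commutatorElement_pow_left_of_commute h, hz, commutatorElement_one_left], hc⟩

lemma IsPGroup.of_forall_coprime_pow_eq_one [hp : Fact p.Prime] [Finite G]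
    (h : ∀ g : G, ∀ m : ℕ, m.Coprime p → g ^ m = 1 → g = 1) : IsPGroup p G := by
  refine .of_card (Nat.eq_prime_pow_of_unique_prime_dvd Nat.card_pos.ne' fun {d} hd hdvd => ?_)
  obtain ⟨g, hg⟩ := exists_prime_orderOf_dvd_card' (hp := ⟨hd⟩) d hdvd
  by_contra hne
  have hg1 := h g d ((Nat.coprime_primes hd hp.out).mpr hne) (hg ▸ pow_orderOf_eq_one g)
  rw [hg1, orderOf_one] at hg
  exact hd.ne_one hg.symm

lemma mem_centralizer_subgroupOf_iff {H K : Subgroup G} (hHK : H ≤ K) {x : K} :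
    x ∈ centralizer (H.subgroupOf K : Set K) ↔ (x : G) ∈ centralizer (H : Set G) := by
  simp only [mem_centralizer_iff, SetLike.mem_coe, mem_subgroupOf, Subtype.forall,
    Subtype.ext_iff, coe_mul]
  exact ⟨fun h g hg => h g (hHK hg) hg, fun h g _ hg => h g hg⟩

theorem HasCharP.isPGroup_centralizer [Fact p.Prime] [Finite G] (hG : HasCharP p G)
    {P : Subgroup G} [P.Normal] (hP : pCore p G ⊓ centralizer (P : Set G) ≤ P) :
    IsPGroup p (centralizer (P : Set G)) := by
  refine .of_forall_coprime_pow_eq_one fun z m hmp hzm => ?_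
  replace hzm : (z : G) ^ m = 1 := by simpa using congrArg Subtype.val hzm
  have hzQ : (z : G) ∈ pCore p G := hG <| mem_centralizer_iff.mpr fun q hq => by
    have hcXQ : ⁅(z : G), q⁆ ∈ centralizer (P : Set G) ⊓ pCore p G :=
      commutator_le_inf _ _ (commutator_mem_commutator z.2 hq)
    have hzc : Commute (z : G) ⁅(z : G), q⁆ :=
      (mem_centralizer_iff.mp z.2 _ (hP ⟨hcXQ.2, hcXQ.1⟩)).symm
    obtain ⟨k, hk⟩ := pow_pow_eq_one_of_mem_pCore hcXQ.2
    exact (commute_of_commute_commutatorElement hzc hzm hk (hmp.pow_right k)).symm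
  obtain ⟨k, hk⟩ := pow_pow_eq_one_of_mem_pCore hzQ
  exact Subtype.ext ((pow_eq_one_iff_of_coprime (hmp.pow_right k)).mp ⟨hzm, hk⟩)

lemma le_normalizer_map_subtype (K : Subgroup G) (H : Subgroup K) [H.Normal] :
    K ≤ normalizer (H.map K.subtype : Set G) := by
  simpa [normalizer_eq_top, ← MonoidHom.range_eq_map] using le_normalizer_map (H := H) K.subtype

lemma zpowers_le_map_subtype_pCore_centralizer {t : G} (ht : IsPGroup p (zpowers t)) :
    zpowers t ≤ (pCore p (centralizer (zpowers t : Set G))).map (centralizer _).subtype := by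
  have : ((zpowers t).subgroupOf (centralizer (zpowers t : Set G))).Normal :=
    (normal_subgroupOf_iff (le_centralizer _)).mpr fun x c hx hc => by
      rwa [← mem_centralizer_iff.mp hc x hx, mul_inv_cancel_right]
  exact le_map_subtype_pCore (le_centralizer _) ht

end PCore

/-- If `T` has order `p`, `C = C_G(T)`, `O_C = O_p(C)`, and `N_G(O_C)` has
characteristic `p`, then `C` has characteristic `p`. -/
theorem stmt15 (p : ℕ) [Fact p.Prime] (G : Type*) [Group G] [Finite G]
    (t : G) (ht : orderOf t = p) (T C O : Subgroup G)
    (hT : T = Subgroup.zpowers t) (hC : C = Subgroup.centralizer (T : Set G))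
    (hO : O = (pCore p ↥C).map C.subtype)
    (hchar : HasCharP p ↥(Subgroup.normalizer (O : Set G))) :
    HasCharP p ↥C := by
  have hCN : C ≤ normalizer (O : Set G) := hO ▸ le_normalizer_map_subtype C (pCore p C)
  set N := normalizer (O : Set G)
  have hTO : T ≤ O := by
    subst hT hC hO
    exact zpowers_le_map_subtype_pCore_centralizer (.of_card (n := 1) (by
      rw [Nat.card_zpowers, ht, pow_one]))
  have hOC : centralizer (O : Set G) ≤ C := hC ▸ centralizer_le hTO
  have hX : IsPGroup p (centralizer (O.subgroupOf N : Set N)) := by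
    refine hchar.isPGroup_centralizer fun x ⟨hxQ, hxX⟩ => ?_
    have hxC : (x : G) ∈ C := hOC ((mem_centralizer_subgroupOf_iff le_normalizer).mp hxX)
    have : (⟨x, hxC⟩ : C) ∈ pCore p C :=
      pCore_isPGroup.comap_le_pCore (inclusion hCN) (inclusion_injective hCN) hxQ
    rw [mem_subgroupOf, hO]
    exact ⟨_, this, rfl⟩
  intro c hc
  refine hX.comap_le_pCore (inclusion hCN) (inclusion_injective hCN) ?_
  rw [mem_comap, mem_centralizer_subgroupOf_iff le_normalizer]
  refine mem_centralizer_iff.mpr fun x hx => ?_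
  rw [hO] at hx
  obtain ⟨o, ho, rfl⟩ := hx
  exact congrArg Subtype.val (mem_centralizer_iff.mp hc o ho)
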